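/- arXiv:2104.06742 — 3 statements merged into one kernel-verified Lean document; each statement's English description precedes it below -/
import Mathlib

section
/- The function C(C_DL) = log det(Λ + ρ^{-1} I) - log det(ρ^{-1} I + (Λ^{-1} + σ^{-2} Q^† C_DL Q)^{-1}) is concave on the cone of M×M positive semidefinite Hermitian matrices C_DL. -/
/-!
Write `X(C) = Λ⁻¹ + σ⁻² Qᴴ C Q`; it is affine in `C` and positive definite on the positive
semidefinite cone, and the capacity is a constant minus `log det (ρ⁻¹ I + X⁻¹)`. Since
`(ρ⁻¹ I + X⁻¹)⁻¹ = ρ I - ρ² (X + ρ I)⁻¹` and the matrix inverse is operator convex, the map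
`X ↦ (ρ⁻¹ I + X⁻¹)⁻¹` is operator concave on positive definite matrices. The function `log det` is
concave and monotone in the Loewner order there, as one sees by diagonalising two positive definite
matrices simultaneously by a congruence. Hence `log det (ρ⁻¹ I + X⁻¹) = -log det (ρ⁻¹ I + X⁻¹)⁻¹`
is convex in `X`, and the capacity is concave in `C`.
-/

open Matrix ComplexOrder Set
open scoped MatrixOrder

theorem ConcaveOn.comp_of_mapsTo {𝕜 E F β : Type*} [Semiring 𝕜] [PartialOrder 𝕜]
    [AddCommMonoid E] [AddCommMonoid F] [PartialOrder F] [AddCommMonoid β] [PartialOrder β]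
    [SMul 𝕜 E] [SMul 𝕜 F] [SMul 𝕜 β] {s : Set E} {t : Set F} {f : E → F} {g : F → β}
    (hg : ConcaveOn 𝕜 t g) (hg' : MonotoneOn g t) (hf : ConcaveOn 𝕜 s f) (hst : MapsTo f s t) :
    ConcaveOn 𝕜 s (g ∘ f) :=
  ⟨hf.1, fun _ hx _ hy _ _ ha hb hab =>
    (hg.2 (hst hx) (hst hy) ha hb hab).trans <|
      hg' (hg.1 (hst hx) (hst hy) ha hb hab) (hst (hf.1 hx hy ha hb hab)) (hf.2 hx hy ha hb hab)⟩

namespace Matrix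

section Cones

variable {n : Type*}

theorem convex_posSemidef : Convex ℝ {A : Matrix n n ℂ | A.PosSemidef} :=
  fun _ hA _ hB _ _ ha hb _ => (hA.smul ha).add (hB.smul hb)

theorem convex_posDef : Convex ℝ {A : Matrix n n ℂ | A.PosDef} :=
  convex_iff_forall_pos.mpr fun _ hA _ hB _ _ ha hb _ => (hA.smul ha).add (hB.smul hb)

end Cones

variable {n : Type*} [Fintype n] [DecidableEq n]

theorem PosDef.re_det_pos {A : Matrix n n ℂ} (hA : A.PosDef) : 0 < A.det.re :=
  (Complex.pos_iff.mp hA.det_pos).1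

theorem IsHermitian.log_re_det_inv {A : Matrix n n ℂ} (hA : A.IsHermitian) :
    Real.log A⁻¹.det.re = -Real.log A.det.re := by
  have hdet : A.det = ((∏ i, hA.eigenvalues i : ℝ) : ℂ) := by
    rw [hA.det_eq_prod_eigenvalues, Complex.ofReal_prod]; rfl
  rw [det_nonsing_inv, Ring.inverse_eq_inv', hdet, ← Complex.ofReal_inv, Complex.ofReal_re,
    Complex.ofReal_re, Real.log_inv]

def congrDiagonal (P : Matrix n n ℂ) : (n → ℝ) →ₗ[ℝ] Matrix n n ℂ where
  toFun d := P * diagonal (fun i => (d i : ℂ)) * Pᴴ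
  map_add' d e := by simp [← diagonal_add, Matrix.mul_add, Matrix.add_mul]
  map_smul' c d := by
    rw [RingHom.id_apply, ← Complex.coe_smul, ← Matrix.smul_mul, ← Matrix.mul_smul,
      ← diagonal_smul]
    congr 3
    ext i
    simp

theorem congrDiagonal_apply (P : Matrix n n ℂ) (d : n → ℝ) :
    congrDiagonal P d = P * diagonal (fun i => (d i : ℂ)) * Pᴴ := rfl

theorem re_det_congrDiagonal (P : Matrix n n ℂ) (d : n → ℝ) :
    (congrDiagonal P d).det.re = (congrDiagonal P 1).det.re * ∏ i, d i := by
  simp only [congrDiagonal_apply, det_mul, det_diagonal, Pi.one_apply, Complex.ofReal_one,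
    Finset.prod_const_one, mul_one, ← Complex.ofReal_prod]
  rw [mul_right_comm, Complex.re_mul_ofReal]

theorem log_re_det_congrDiagonal {P : Matrix n n ℂ} (hP : (congrDiagonal P 1).det.re ≠ 0)
    {d : n → ℝ} (hd : ∀ i, d i ≠ 0) :
    Real.log (congrDiagonal P d).det.re
      = Real.log (congrDiagonal P 1).det.re + ∑ i, Real.log (d i) := by
  rw [re_det_congrDiagonal, Real.log_mul hP (Finset.prod_ne_zero_iff.mpr fun i _ => hd i),
    Real.log_prod fun i _ => hd i]

/-- Simultaneous diagonalisation: `A = R Rᴴ`, and `R⁻¹ B R⁻ᴴ = U D Uᴴ` by the spectral theorem. -/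
theorem PosDef.exists_congrDiagonal {A B : Matrix n n ℂ} (hA : A.PosDef) (hB : B.PosSemidef) :
    ∃ (P : Matrix n n ℂ) (μ : n → ℝ),
      0 ≤ μ ∧ A = congrDiagonal P 1 ∧ B = congrDiagonal P μ := by
  obtain ⟨R, hR, rfl⟩ : ∃ R, IsUnit R ∧ A = R * star R :=
    (CStarAlgebra.isStrictlyPositive_TFAE.out 0 6).mp hA.isStrictlyPositive
  have hC : (R⁻¹ * B * R⁻¹ᴴ).PosSemidef := hB.mul_mul_conjTranspose_same R⁻¹
  obtain ⟨U, μ, hU, hμ, hCU⟩ : ∃ (U : Matrix n n ℂ) (μ : n → ℝ), U * Uᴴ = 1 ∧ 0 ≤ μ ∧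
      R⁻¹ * B * R⁻¹ᴴ = U * diagonal (fun i => (μ i : ℂ)) * Uᴴ :=
    ⟨_, _, mem_unitaryGroup_iff.mp hC.isHermitian.eigenvectorUnitary.2, hC.eigenvalues_nonneg,
      hC.isHermitian.spectral_theorem⟩
  have hRR : R * R⁻¹ = 1 := mul_nonsing_inv R ((isUnit_iff_isUnit_det R).mp hR)
  refine ⟨R * U, μ, hμ, ?_, ?_⟩
  · simp only [congrDiagonal_apply, Pi.one_apply, Complex.ofReal_one, diagonal_one,
      Matrix.mul_one, conjTranspose_mul, Matrix.mul_assoc]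
    rw [← Matrix.mul_assoc U, hU, Matrix.one_mul, star_eq_conjTranspose]
  · calc B = R * (R⁻¹ * B * R⁻¹ᴴ) * Rᴴ := by
          rw [Matrix.mul_assoc, Matrix.mul_assoc, ← conjTranspose_mul, hRR, conjTranspose_one,
            Matrix.mul_one, ← Matrix.mul_assoc, hRR, Matrix.one_mul]
      _ = _ := by
          rw [hCU]
          simp only [congrDiagonal_apply, conjTranspose_mul, Matrix.mul_assoc]

theorem PosDef.exists_congrDiagonal_pos {A B : Matrix n n ℂ} (hA : A.PosDef)
    (hB : B.PosDef) :
    ∃ (P : Matrix n n ℂ) (μ : n → ℝ),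
      (∀ i, 0 < μ i) ∧ A = congrDiagonal P 1 ∧ B = congrDiagonal P μ := by
  obtain ⟨P, μ, hμ, rfl, rfl⟩ := hA.exists_congrDiagonal hB.posSemidef
  have hprod : ∏ i, μ i ≠ 0 := by
    have h := hB.re_det_pos
    rw [re_det_congrDiagonal] at h
    exact right_ne_zero_of_mul h.ne'
  exact ⟨P, μ, fun i => (hμ i).lt_of_ne' (Finset.prod_ne_zero_iff.mp hprod i (Finset.mem_univ i)),
    rfl, rfl⟩

theorem concaveOn_log_re_det :
    ConcaveOn ℝ {A : Matrix n n ℂ | A.PosDef} (fun A => Real.log A.det.re) := by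
  refine ⟨convex_posDef, fun A hA B hB a b ha hb hab => ?_⟩
  obtain ⟨P, μ, hμ, rfl, rfl⟩ := PosDef.exists_congrDiagonal_pos hA hB
  have hcomb_ne : ∀ i, (a • 1 + b • μ) i ≠ 0 := fun i =>
    (convex_Ioi (0 : ℝ) (mem_Ioi.mpr one_pos) (hμ i) ha hb hab).ne'
  have hlog : ∀ i, b * Real.log (μ i) ≤ Real.log ((a • 1 + b • μ) i) := fun i => by
    have h := strictConcaveOn_log_Ioi.concaveOn.2 (mem_Ioi.mpr one_pos) (hμ i) ha hb hab
    simpa only [Real.log_one, smul_eq_mul, mul_zero, zero_add, mul_one, Pi.add_apply,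
      Pi.smul_apply, Pi.one_apply] using h
  have hA0 := hA.re_det_pos.ne'
  dsimp only
  rw [← map_smul, ← map_smul, ← map_add, log_re_det_congrDiagonal hA0 hcomb_ne,
    log_re_det_congrDiagonal hA0 fun i => (hμ i).ne', smul_eq_mul, smul_eq_mul]
  have hsum := Finset.sum_le_sum fun i (_ : i ∈ Finset.univ) => hlog i
  rw [← Finset.mul_sum] at hsum
  linear_combination hsum + Real.log (congrDiagonal P 1).det.re * hab

theorem monotoneOn_log_re_det :
    MonotoneOn (fun A : Matrix n n ℂ => Real.log A.det.re) {A | A.PosDef} := by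
  intro A hA B _ hAB
  obtain ⟨P, μ, hμ, rfl, hBA⟩ := PosDef.exists_congrDiagonal hA (le_iff.mp hAB)
  have hB : B = congrDiagonal P (1 + μ) := by rw [map_add, ← hBA, add_sub_cancel]
  have hge : ∀ i, 1 ≤ (1 + μ) i := fun i => by simpa using hμ i
  dsimp only
  rw [hB, log_re_det_congrDiagonal hA.re_det_pos.ne' fun i => (one_pos.trans_le (hge i)).ne',
    le_add_iff_nonneg_right]
  exact Finset.sum_nonneg fun i _ => Real.log_nonneg (hge i)

instance : PosSMulMono ℝ (Matrix n n ℂ) :=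
  ⟨fun _ ha _ _ h => le_iff.mpr (by simpa only [← smul_sub] using (le_iff.mp h).smul ha)⟩

open scoped Matrix.Norms.L2Operator in
theorem convexOn_inv_smul_one_add {t : ℝ} (ht : 0 < t) :
    ConvexOn ℝ {X : Matrix n n ℂ | X.PosSemidef} (fun X => (t • 1 + X)⁻¹) := by
  have h := CStarAlgebra.convexOn_ringInverse_algebraMap_add (A := Matrix n n ℂ) ht
  simpa only [Algebra.algebraMap_eq_smul_one, ← nonsing_inv_eq_ringInverse, Ici,
    nonneg_iff_posSemidef] using h

theorem inv_smul_one_add_inv {r : ℝ} (hr : r ≠ 0) {X : Matrix n n ℂ} (hX : IsUnit X.det)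
    (hZ : IsUnit (r⁻¹ • 1 + X).det) :
    (r • 1 + X⁻¹)⁻¹ = r⁻¹ • 1 - r⁻¹ ^ 2 • (r⁻¹ • 1 + X)⁻¹ := by
  set Z := r⁻¹ • 1 + X
  have hZX : Z * X⁻¹ = r⁻¹ • X⁻¹ + 1 := by
    simp only [Z, Matrix.add_mul, smul_mul_assoc, Matrix.one_mul, mul_nonsing_inv _ hX]
  refine inv_eq_left_inv ?_
  calc (r⁻¹ • 1 - r⁻¹ ^ 2 • Z⁻¹) * (r • 1 + X⁻¹)
      = 1 + r⁻¹ • X⁻¹ - r⁻¹ • (Z⁻¹ * (r⁻¹ • X⁻¹ + 1)) := by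
        simp only [Matrix.sub_mul, Matrix.mul_add, Matrix.smul_mul, Matrix.mul_smul,
          Matrix.one_mul, Matrix.mul_one]
        linear_combination (norm := module) inv_mul_cancel₀ hr • (1 - r⁻¹ • Z⁻¹)
    _ = 1 := by
        rw [← hZX, ← Matrix.mul_assoc, nonsing_inv_mul _ hZ, Matrix.one_mul,
          add_sub_cancel_right]

theorem concaveOn_inv_smul_one_add_inv {r : ℝ} (hr : 0 < r) :
    ConcaveOn ℝ {X : Matrix n n ℂ | X.PosDef} (fun X => (r • 1 + X⁻¹)⁻¹) := by
  have h := ((convexOn_inv_smul_one_add (n := n) (inv_pos.mpr hr)).subset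
    (fun X hX => hX.posSemidef) convex_posDef).smul (sq_nonneg r⁻¹)
  refine ((concaveOn_const (r⁻¹ • (1 : Matrix n n ℂ)) convex_posDef).sub h).congr
    fun X hX => (inv_smul_one_add_inv hr.ne' hX.det_pos.ne'.isUnit ?_).symm
  exact ((PosDef.one.smul (inv_pos.mpr hr)).add hX).det_pos.ne'.isUnit

theorem convexOn_log_re_det_smul_one_add_inv {r : ℝ} (hr : 0 < r) :
    ConvexOn ℝ {X : Matrix n n ℂ | X.PosDef} (fun X => Real.log (r • 1 + X⁻¹).det.re) := by
  have hpd : ∀ X : Matrix n n ℂ, X.PosDef → (r • 1 + X⁻¹).PosDef := fun X hX =>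
    (PosDef.one.smul hr).add hX.inv
  refine (concaveOn_log_re_det.comp_of_mapsTo monotoneOn_log_re_det
    (concaveOn_inv_smul_one_add_inv hr) fun X hX => (hpd X hX).inv).neg.congr fun X hX => ?_
  simp only [Pi.neg_apply, Function.comp_apply, (hpd X hX).isHermitian.log_re_det_inv, neg_neg]

end Matrix

theorem capacity_concave_in_training_covariance_general
    (M S : ℕ) (lam : Fin S → ℝ) (hlam : ∀ s, 0 < lam s)
    (ρ σ : ℝ) (hρ : 0 < ρ)
    (Q : Matrix (Fin M) (Fin S) ℂ) :
    ConcaveOn ℝ {C : Matrix (Fin M) (Fin M) ℂ | C.PosSemidef}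
      (fun C =>
        Real.log ((Matrix.diagonal (fun s => (lam s : ℂ))
            + (ρ⁻¹ : ℂ) • (1 : Matrix (Fin S) (Fin S) ℂ)).det.re)
        - Real.log (((ρ⁻¹ : ℂ) • (1 : Matrix (Fin S) (Fin S) ℂ)
            + ((Matrix.diagonal (fun s => (lam s : ℂ)))⁻¹
              + ((σ ^ 2)⁻¹ : ℂ) • (Qᴴ * C * Q))⁻¹).det.re)) := by
  have hΛ : (diagonal fun s => (lam s : ℂ)).PosDef :=
    posDef_diagonal_iff.mpr fun s => Complex.zero_lt_real.mpr (hlam s)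
  let X : Matrix (Fin M) (Fin M) ℂ →ᵃ[ℝ] Matrix (Fin S) (Fin S) ℂ :=
    AffineMap.const ℝ _ (diagonal fun s => (lam s : ℂ))⁻¹ +
      (((σ ^ 2)⁻¹ : ℂ) •
        (mulRightLinearMap (Fin S) ℝ Q ∘ₗ mulLeftLinearMap (Fin M) ℝ Qᴴ)).toAffineMap
  have hX : {C : Matrix (Fin M) (Fin M) ℂ | C.PosSemidef} ⊆ X ⁻¹' {Y | Y.PosDef} := fun C hC =>
    hΛ.inv.add_posSemidef ((hC.conjTranspose_mul_mul_same Q).smul (a := ((σ : ℂ) ^ 2)⁻¹)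
      (by exact_mod_cast (by positivity : (0 : ℝ) ≤ (σ ^ 2)⁻¹)))
  have hconv := ((convexOn_log_re_det_smul_one_add_inv (inv_pos.mpr hρ)).comp_affineMap X).subset
    hX convex_posSemidef
  simp only [← Complex.ofReal_inv, Complex.coe_smul]
  exact (concaveOn_const _ convex_posSemidef).sub hconv

/-- Proposition 2: the secret-key capacity
`C(C_DL) = log det(Λ + ρ⁻¹I) - log det(ρ⁻¹I + (Λ⁻¹ + σ⁻² Qᴴ C_DL Q)⁻¹)`
is concave on the cone of `M×M` positive semidefinite Hermitian matrices. -/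
theorem capacity_concave_in_training_covariance
    (M S : ℕ) (lam : Fin S → ℝ) (hlam : ∀ s, 0 < lam s)
    (ρ σ : ℝ) (hρ : 0 < ρ) (hσ : 0 < σ)
    (Q : Matrix (Fin M) (Fin S) ℂ) (hQ : Qᴴ * Q = 1) :
    ConcaveOn ℝ {C : Matrix (Fin M) (Fin M) ℂ | C.PosSemidef}
      (fun C =>
        Real.log ((Matrix.diagonal (fun s => (lam s : ℂ))
            + (ρ⁻¹ : ℂ) • (1 : Matrix (Fin S) (Fin S) ℂ)).det.re)
        - Real.log (((ρ⁻¹ : ℂ) • (1 : Matrix (Fin S) (Fin S) ℂ)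
            + ((Matrix.diagonal (fun s => (lam s : ℂ)))⁻¹
              + ((σ ^ 2)⁻¹ : ℂ) • (Qᴴ * C * Q))⁻¹).det.re)) :=
  capacity_concave_in_training_covariance_general M S lam hlam ρ σ hρ Q
end

section
/- The optimal water-filling power allocation p_s = max(μ - 1/λ_s, 0) maximizing Σ_s log(1 + λ_s² ρ p_s/(λ_s(ρ + p_s) + 1)) subject to Σ_s p_s ≤ P does not depend on the uplink SNR ρ, i.e., the same allocation is optimal simultaneously for all ρ > 0. -/
/-!
Write `ν = ρ / (μ (ρ + μ))`. The rate `x ↦ log (1 + λ² ρ x / (λ (ρ + x) + 1))` equals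
`log (1 + λ x) - log (1 + λ ρ + λ x) + log (1 + λ ρ)`, a concave function of `x` whose slope at the
water-filling point `max (μ - 1/λ) 0` is exactly `ν` when that point is positive and at most `ν`
when it is zero. These are the KKT conditions of the budget-constrained problem with multiplier `ν`;
since the water level `μ` is fixed by the budget alone and only `ν` depends on `ρ`, the same
allocation is optimal for every `ρ`.
-/

open Real Finset

noncomputable section

def waterfill (μ l : ℝ) : ℝ := max (μ - l⁻¹) 0

def rate (l ρ x : ℝ) : ℝ := log (1 + l ^ 2 * ρ * x / (l * (ρ + x) + 1))

lemma waterfill_nonneg (μ l : ℝ) : 0 ≤ waterfill μ l := le_max_right _ _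

lemma waterfill_eq_zero_of_nonpos {μ l : ℝ} (hl : 0 < l) (hμ : μ ≤ 0) : waterfill μ l = 0 :=
  max_eq_right (by linarith [inv_pos.2 hl])

lemma continuous_waterfill (l : ℝ) : Continuous fun μ => waterfill μ l :=
  (continuous_id.sub continuous_const).max continuous_const

lemma exists_sum_waterfill_eq {ι : Type*} [Fintype ι] [Nonempty ι] {lam : ι → ℝ}
    (hlam : ∀ s, 0 < lam s) {P : ℝ} (hP : 0 < P) :
    ∃ μ, 0 < μ ∧ ∑ s, waterfill μ (lam s) = P := by
  set g : ℝ → ℝ := fun μ => ∑ s, waterfill μ (lam s)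
  have hg0 : g 0 = 0 := sum_eq_zero fun s _ => waterfill_eq_zero_of_nonpos (hlam s) le_rfl
  obtain ⟨s₀⟩ := ‹Nonempty ι›
  set M := (lam s₀)⁻¹ + P
  have hgM : P ≤ g M := calc
    P = waterfill M (lam s₀) := by simp only [waterfill, M, add_sub_cancel_left, max_eq_left hP.le]
    _ ≤ g M := single_le_sum (f := fun s => waterfill M (lam s))
      (fun s _ => waterfill_nonneg _ _) (mem_univ s₀)
  obtain ⟨μ, ⟨hμ0, -⟩, hgμ⟩ := intermediate_value_Icc (add_nonneg (inv_pos.2 (hlam s₀)).le hP.le)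
    (continuous_finsetSum _ fun s _ => continuous_waterfill (lam s)).continuousOn
    (show P ∈ Set.Icc (g 0) (g M) from ⟨by rw [hg0]; exact hP.le, hgM⟩)
  refine ⟨μ, lt_of_le_of_ne hμ0 ?_, hgμ⟩
  rintro rfl
  exact hP.ne' (hgμ.symm.trans hg0)

lemma rate_eq_log_sub_log_add_log (l ρ x : ℝ) (hl : 0 < l) (hρ : 0 < ρ) (hx : 0 ≤ x) :
    rate l ρ x = log (1 + l * x) - log (1 + l * ρ + l * x) + log (1 + l * ρ) := by
  have h : 1 + l ^ 2 * ρ * x / (l * (ρ + x) + 1)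
      = (1 + l * x) * (1 + l * ρ) / (1 + l * ρ + l * x) := by
    field_simp
    ring
  rw [rate, h, log_div (by positivity) (by positivity), log_mul (by positivity) (by positivity)]
  ring

/-- Supergradient inequality for the concave function `x ↦ log (1 + x) - log (1 + c + x)`. -/
lemma log_one_add_sub_log_le {a b c : ℝ} (ha : 0 ≤ a) (hb : 0 ≤ b) (hc : 0 ≤ c) :
    (log (1 + a) - log (1 + c + a)) - (log (1 + b) - log (1 + c + b))
      ≤ c * (a - b) / ((1 + b) * (1 + c + b)) := by
  have hlog : log ((1 + a) * (1 + c + b) / ((1 + b) * (1 + c + a)))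
      = (log (1 + a) - log (1 + c + a)) - (log (1 + b) - log (1 + c + b)) := by
    rw [log_div (by positivity) (by positivity), log_mul (by positivity) (by positivity),
      log_mul (by positivity) (by positivity)]
    ring
  have hsub : (1 + a) * (1 + c + b) / ((1 + b) * (1 + c + a)) - 1
      = c * (a - b) / ((1 + b) * (1 + c + a)) := by
    field_simp
    ring
  calc _ ≤ c * (a - b) / ((1 + b) * (1 + c + a)) :=
        hlog ▸ hsub ▸ log_le_sub_one_of_pos (by positivity)
    _ ≤ c * (a - b) / ((1 + b) * (1 + c + b)) := by
        rw [div_le_div_iff₀ (by positivity) (by positivity)]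
        nlinarith [mul_nonneg (mul_nonneg hc (by positivity : (0 : ℝ) ≤ 1 + b)) (sq_nonneg (a - b))]

/-- The slope of the rate at the water-filling point, bounded by the KKT multiplier. -/
lemma slope_rate_waterfill_le {l ρ μ q : ℝ} (hl : 0 < l) (hρ : 0 < ρ) (hμ : 0 < μ) (hq : 0 ≤ q) :
    l * ρ * (l * q - l * waterfill μ l) / ((1 + l * waterfill μ l) * (1 + l * ρ + l * waterfill μ l))
      ≤ ρ / (μ * (ρ + μ)) * (q - waterfill μ l) := by
  rcases le_total l⁻¹ μ with h | h
  · have hp : waterfill μ l = μ - l⁻¹ := max_eq_left (by linarith)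
    have h1 : 1 + l * (μ - l⁻¹) = l * μ := by field_simp; ring
    have h2 : 1 + l * ρ + l * (μ - l⁻¹) = l * (ρ + μ) := by field_simp; ring
    rw [hp, h1, h2]
    apply le_of_eq
    field_simp
  · have hp : waterfill μ l = 0 := max_eq_right (by linarith)
    have hlμ : l * μ ≤ 1 := by
      simpa [mul_inv_cancel₀ hl.ne'] using mul_le_mul_of_nonneg_left h hl.le
    simp only [hp, mul_zero, add_zero, sub_zero, one_mul]
    rw [div_mul_eq_mul_div, div_le_div_iff₀ (by positivity) (by positivity)]
    nlinarith [mul_nonneg (mul_nonneg hρ.le hq)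
      (mul_nonneg (sub_nonneg.2 hlμ) (by positivity : (0 : ℝ) ≤ 1 + l * μ + l * ρ))]

lemma rate_le_rate_waterfill_add {l ρ μ q : ℝ} (hl : 0 < l) (hρ : 0 < ρ) (hμ : 0 < μ)
    (hq : 0 ≤ q) :
    rate l ρ q ≤ rate l ρ (waterfill μ l) + ρ / (μ * (ρ + μ)) * (q - waterfill μ l) := by
  have hp := waterfill_nonneg μ l
  have hconcave := log_one_add_sub_log_le (c := l * ρ) (by positivity : 0 ≤ l * q)
    (by positivity : 0 ≤ l * waterfill μ l) (by positivity)
  rw [rate_eq_log_sub_log_add_log l ρ q hl hρ hq, rate_eq_log_sub_log_add_log l ρ _ hl hρ hp]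
  linarith [slope_rate_waterfill_le hl hρ hμ hq]

/-- Sufficiency of the KKT conditions for maximizing a separable objective under a budget. -/
lemma sum_le_sum_of_le_add_mul_sub {ι : Type*} (t : Finset ι) {f : ι → ℝ → ℝ} {p q : ι → ℝ}
    {ν : ℝ} (hν : 0 ≤ ν) (hf : ∀ s ∈ t, f s (q s) ≤ f s (p s) + ν * (q s - p s))
    (hbudget : ∑ s ∈ t, q s ≤ ∑ s ∈ t, p s) :
    ∑ s ∈ t, f s (q s) ≤ ∑ s ∈ t, f s (p s) := by
  have hsum := sum_le_sum hf
  rw [sum_add_distrib, ← mul_sum, sum_sub_distrib] at hsum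
  nlinarith [mul_nonneg hν (sub_nonneg.2 hbudget)]

end

/-- The water-filling allocation is independent of the uplink SNR: there is a
single water level `μ > 0` (with the budget met with equality) such that the
allocation `p_s = max(μ - 1/λ_s, 0)` is optimal simultaneously for every `ρ > 0`. -/
theorem waterfilling_independent_of_uplink_SNR
    (S : ℕ) (lam : Fin S → ℝ) (hlam : ∀ s, 0 < lam s)
    (P : ℝ) (hP : 0 < P) (hS : 0 < S) :
    ∃ μ : ℝ, 0 < μ ∧
      (∑ s, max (μ - (lam s)⁻¹) 0) = P ∧
      ∀ ρ : ℝ, 0 < ρ →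
        ∀ q : Fin S → ℝ, (∀ s, 0 ≤ q s) → (∑ s, q s) ≤ P →
          (∑ s, Real.log (1 + (lam s) ^ 2 * ρ * q s / (lam s * (ρ + q s) + 1)))
            ≤ ∑ s, Real.log (1 + (lam s) ^ 2 * ρ * max (μ - (lam s)⁻¹) 0
                / (lam s * (ρ + max (μ - (lam s)⁻¹) 0) + 1)) := by
  have : Nonempty (Fin S) := ⟨⟨0, hS⟩⟩
  obtain ⟨μ, hμ, hbudget⟩ := exists_sum_waterfill_eq hlam hP
  refine ⟨μ, hμ, hbudget, fun ρ hρ q hq hqP => ?_⟩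
  exact sum_le_sum_of_le_add_mul_sub (f := fun s => rate (lam s) ρ) univ
    (by positivity : 0 ≤ ρ / (μ * (ρ + μ)))
    (fun s _ => rate_le_rate_waterfill_add (hlam s) hρ hμ (hq s)) (hbudget.symm ▸ hqP)
end

section
/- For the constrained problem max Σ_{s∈T} log(1 + λ_s²ρ p_s/(λ_s(ρ+p_s)+1)) over subsets T ⊆ {1,...,S} with |T| ≤ T_max and powers p_s ≥ 0 (s ∈ T) with Σ p_s ≤ P, an optimal solution activates the T_max indices with largest λ_s (assuming the λ_s are distinct) and water-fills power over them. -/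
/-!
Each mode's rate `x ↦ log (1 + λ² ρ x / (λ (ρ + x) + 1))` is concave, with slope
`ρ / (μ (ρ + μ))` at the water-filling power `x = μ - 1/λ`, independently of `λ`. Taking this common
slope `ν` as the multiplier of the power budget, every mode's rate lies below `V(λ) + ν x`, where
`V(λ) ≥ 0` is the Lagrangian value attained by water-filling. `V` increases with `λ`, so a
feasible allocation supported on at most `Tmax` modes is beaten by the one that puts the budget,
water-filled, on the `Tmax` strongest modes; the level `μ` is fixed by the intermediate value theorem.
-/

open Finset

theorem Finset.sum_le_sum_of_card_le_of_forall_le {ι M : Type*} [DecidableEq ι]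
    [AddCommMonoid M] [LinearOrder M] [IsOrderedAddMonoid M] {A T : Finset ι} {h : ι → M}
    (hcard : #A ≤ #T) (hT : ∀ t ∈ T, 0 ≤ h t) (hle : ∀ a ∈ A, a ∉ T → ∀ t ∈ T, h a ≤ h t) :
    ∑ a ∈ A, h a ≤ ∑ t ∈ T, h t := by
  rw [← sum_inter_add_sum_sdiff A T, ← sum_inter_add_sum_sdiff T A, inter_comm T A]
  refine add_le_add le_rfl ?_
  have hsdiff : #(A \ T) ≤ #(T \ A) := card_sdiff_le_card_sdiff_iff.2 hcard
  rcases (T \ A).eq_empty_or_nonempty with hTA | hTA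
  · rw [hTA, card_empty, Nat.le_zero, card_eq_zero] at hsdiff
    rw [hsdiff, hTA]
  obtain ⟨t₀, ht₀, hmin⟩ := exists_min_image (T \ A) h hTA
  calc ∑ a ∈ A \ T, h a
      ≤ #(A \ T) • h t₀ := by
        refine sum_le_card_nsmul _ _ _ fun a ha => ?_
        rw [mem_sdiff] at ha
        exact hle a ha.1 ha.2 t₀ (mem_sdiff.1 ht₀).1
    _ ≤ #(T \ A) • h t₀ := nsmul_le_nsmul_left (hT t₀ (mem_sdiff.1 ht₀).1) hsdiff
    _ ≤ ∑ t ∈ T \ A, h t := card_nsmul_le_sum _ _ _ hmin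

theorem exists_sum_max_sub_eq {ι : Type*} {s : Finset ι} (hs : s.Nonempty) (a : ι → ℝ)
    {P : ℝ} (hP : 0 ≤ P) : ∃ μ, (∃ i ∈ s, a i ≤ μ) ∧ ∑ t ∈ s, max (μ - a t) 0 = P := by
  obtain ⟨i, hi, hmin⟩ := exists_min_image s a hs
  have hcont : Continuous fun μ => ∑ t ∈ s, max (μ - a t) 0 := by fun_prop
  have hlow : ∑ t ∈ s, max (a i - a t) 0 = 0 :=
    sum_eq_zero fun t ht => max_eq_right (sub_nonpos.2 (hmin t ht))
  have hhigh : P ≤ ∑ t ∈ s, max (a i + P - a t) 0 :=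
    calc P = max (a i + P - a i) 0 := by rw [add_sub_cancel_left, max_eq_left hP]
      _ ≤ _ := single_le_sum (f := fun t => max (a i + P - a t) 0)
          (fun t _ => le_max_right _ _) hi
  obtain ⟨μ, hμ, hsum⟩ := intermediate_value_Icc (le_add_of_nonneg_right hP)
    hcont.continuousOn ⟨hlow.symm ▸ hP, hhigh⟩
  exact ⟨μ, ⟨i, hi, hμ.1⟩, hsum⟩

noncomputable def modeRate (ρ lam x : ℝ) : ℝ :=
  Real.log (1 + lam ^ 2 * ρ * x / (lam * (ρ + x) + 1))

noncomputable def waterFill (μ lam : ℝ) : ℝ := max (μ - lam⁻¹) 0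

/-- The maximum over `x ≥ 0` of `modeRate ρ lam x - ν * x` (attained at `waterFill μ lam`), where
`ν = ρ / (μ * (ρ + μ))` is the multiplier of the power budget at water level `μ`. -/
noncomputable def lagrangeValue (ρ μ lam : ℝ) : ℝ :=
  modeRate ρ lam (waterFill μ lam) - ρ / (μ * (ρ + μ)) * waterFill μ lam

section

variable {ρ lam x : ℝ}

@[simp]
theorem modeRate_zero (ρ lam : ℝ) : modeRate ρ lam 0 = 0 := by
  simp [modeRate]

theorem modeRate_arg_pos (hl : 0 < lam) (hρ : 0 ≤ ρ) (hx : 0 ≤ x) :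
    0 < 1 + lam ^ 2 * ρ * x / (lam * (ρ + x) + 1) := by
  positivity

theorem modeRate_le_modeRate_of_le {lam' : ℝ} (hl : 0 < lam) (hll' : lam ≤ lam') (hρ : 0 ≤ ρ)
    (hx : 0 ≤ x) : modeRate ρ lam x ≤ modeRate ρ lam' x := by
  have hl' : 0 < lam' := hl.trans_le hll'
  refine Real.log_le_log (modeRate_arg_pos hl hρ hx) (add_le_add_right ?_ 1)
  rw [div_le_div_iff₀ (by positivity) (by positivity)]
  have : 0 ≤ ρ * x * (lam' - lam) * (lam * lam' * (ρ + x) + lam + lam') := by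
    have := sub_nonneg.2 hll'
    positivity
  linarith

/-- Concavity of `modeRate ρ lam`: the slope is its derivative at `p`. -/
theorem modeRate_le_tangent {p : ℝ} (hl : 0 < lam) (hρ : 0 ≤ ρ) (hp : 0 ≤ p) (hx : 0 ≤ x) :
    modeRate ρ lam x ≤ modeRate ρ lam p
      + lam ^ 2 * ρ / ((lam * p + 1) * (lam * (ρ + p) + 1)) * (x - p) := by
  have hNx := modeRate_arg_pos hl hρ hx
  have hNp := modeRate_arg_pos hl hρ hp
  have hlog : modeRate ρ lam x - modeRate ρ lam p
      ≤ (1 + lam ^ 2 * ρ * x / (lam * (ρ + x) + 1))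
        / (1 + lam ^ 2 * ρ * p / (lam * (ρ + p) + 1)) - 1 := by
    rw [modeRate, modeRate, ← Real.log_div hNx.ne' hNp.ne']
    exact Real.log_le_sub_one_of_pos (div_pos hNx hNp)
  have hratio : (1 + lam ^ 2 * ρ * x / (lam * (ρ + x) + 1))
        / (1 + lam ^ 2 * ρ * p / (lam * (ρ + p) + 1)) - 1
      = lam ^ 2 * ρ / ((lam * p + 1) * (lam * (ρ + x) + 1)) * (x - p) := by
    field_simp
    ring
  have hslope : lam ^ 2 * ρ / ((lam * p + 1) * (lam * (ρ + x) + 1)) * (x - p)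
      ≤ lam ^ 2 * ρ / ((lam * p + 1) * (lam * (ρ + p) + 1)) * (x - p) := by
    rw [div_mul_eq_mul_div, div_mul_eq_mul_div, div_le_div_iff₀ (by positivity) (by positivity)]
    have : 0 ≤ lam ^ 3 * ρ * (lam * p + 1) * (x - p) ^ 2 := by positivity
    linarith
  linarith

variable {μ : ℝ}

theorem modeRate_le_lagrangeValue_add (hl : 0 < lam) (hρ : 0 ≤ ρ) (hμ : 0 < μ) (hx : 0 ≤ x) :
    modeRate ρ lam x ≤ lagrangeValue ρ μ lam + ρ / (μ * (ρ + μ)) * x := by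
  rw [lagrangeValue, waterFill]
  rcases le_or_gt μ lam⁻¹ with hμl | hμl
  · have hlμ : lam * μ ≤ 1 := by
      simpa [mul_inv_cancel₀ hl.ne'] using mul_le_mul_of_nonneg_left hμl hl.le
    have hslope : lam ^ 2 * ρ / ((lam * 0 + 1) * (lam * (ρ + 0) + 1)) ≤ ρ / (μ * (ρ + μ)) := by
      rw [div_le_div_iff₀ (by positivity) (by positivity)]
      nlinarith [mul_nonneg hρ hl.le, mul_nonneg (mul_nonneg hρ hl.le) (sub_nonneg.2 hlμ)]
    rw [max_eq_right (sub_nonpos.2 hμl), modeRate_zero, mul_zero, sub_zero, zero_add]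
    calc modeRate ρ lam x
        ≤ modeRate ρ lam 0 + lam ^ 2 * ρ / ((lam * 0 + 1) * (lam * (ρ + 0) + 1)) * (x - 0) :=
          modeRate_le_tangent hl hρ le_rfl hx
      _ ≤ ρ / (μ * (ρ + μ)) * x := by
          rw [modeRate_zero, zero_add, sub_zero]
          exact mul_le_mul_of_nonneg_right hslope hx
  · have hp : 0 < μ - lam⁻¹ := sub_pos.2 hμl
    have hslope : lam ^ 2 * ρ / ((lam * (μ - lam⁻¹) + 1) * (lam * (ρ + (μ - lam⁻¹)) + 1))
        = ρ / (μ * (ρ + μ)) := by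
      have h₁ : lam * (μ - lam⁻¹) + 1 = lam * μ := by field_simp; ring
      have h₂ : lam * (ρ + (μ - lam⁻¹)) + 1 = lam * (ρ + μ) := by field_simp; ring
      rw [h₁, h₂]
      field_simp
    have := modeRate_le_tangent hl hρ hp.le hx
    rw [hslope] at this
    rw [max_eq_left hp.le]
    linarith

theorem lagrangeValue_nonneg (hl : 0 < lam) (hρ : 0 ≤ ρ) (hμ : 0 < μ) :
    0 ≤ lagrangeValue ρ μ lam := by
  simpa using modeRate_le_lagrangeValue_add hl hρ hμ le_rfl

theorem lagrangeValue_monotoneOn (hρ : 0 ≤ ρ) (hμ : 0 < μ) :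
    MonotoneOn (lagrangeValue ρ μ) (Set.Ioi 0) := by
  intro lam hl lam' hl' hll'
  have hp : 0 ≤ waterFill μ lam := le_max_right _ _
  calc lagrangeValue ρ μ lam
      ≤ modeRate ρ lam' (waterFill μ lam) - ρ / (μ * (ρ + μ)) * waterFill μ lam :=
        sub_le_sub_right (modeRate_le_modeRate_of_le hl hll' hρ hp) _
    _ ≤ lagrangeValue ρ μ lam' := by
        linarith [modeRate_le_lagrangeValue_add (μ := μ) hl' hρ hμ hp]

end

/-- Corollary 1: with a pilot-budget constraint of at most `Tmax` active modes,
an optimal solution activates the `Tmax` strongest spatial modes (the `λ_s` being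
in strictly decreasing order) and water-fills power over them: there is `μ > 0`
such that `p_s = max(μ - 1/λ_s, 0)` for `s < Tmax` and `p_s = 0` otherwise uses
the full budget and dominates every feasible allocation with at most `Tmax`
active modes. -/
theorem strongest_modes_waterfilling_under_pilot_constraint
    (S : ℕ) (lam : Fin S → ℝ) (hlam : ∀ s, 0 < lam s)
    (hdec : ∀ i j : Fin S, i < j → lam j < lam i)
    (ρ P : ℝ) (hρ : 0 < ρ) (hP : 0 < P)
    (Tmax : ℕ) (hTmax : 0 < Tmax) (hTS : Tmax ≤ S) :
    ∃ μ : ℝ, 0 < μ ∧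
      (∑ s : Fin S, (if (s : ℕ) < Tmax then max (μ - (lam s)⁻¹) 0 else 0)) = P ∧
      ∀ q : Fin S → ℝ, (∀ s, 0 ≤ q s) → (∑ s, q s) ≤ P →
        (Finset.univ.filter (fun s => q s ≠ 0)).card ≤ Tmax →
        (∑ s, Real.log (1 + (lam s) ^ 2 * ρ * q s / (lam s * (ρ + q s) + 1)))
          ≤ ∑ s, Real.log (1 + (lam s) ^ 2 * ρ
              * (if (s : ℕ) < Tmax then max (μ - (lam s)⁻¹) 0 else 0)
              / (lam s * (ρ + (if (s : ℕ) < Tmax then max (μ - (lam s)⁻¹) 0 else 0)) + 1)) := by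
  set T : Finset (Fin S) := univ.filter fun s => (s : ℕ) < Tmax
  have hT : #T = Tmax := by rw [Fin.card_filter_val_lt, min_eq_right hTS]
  obtain ⟨μ, ⟨i, -, hμi⟩, hfill⟩ :=
    exists_sum_max_sub_eq (card_pos.1 (hT ▸ hTmax)) (fun s => (lam s)⁻¹) hP.le
  have hμ : 0 < μ := (inv_pos.2 (hlam i)).trans_le hμi
  refine ⟨μ, hμ, by rwa [← sum_filter], fun q hq hqP hcard => ?_⟩
  show ∑ s, modeRate ρ (lam s) (q s)
    ≤ ∑ s, modeRate ρ (lam s) (if (s : ℕ) < Tmax then waterFill μ (lam s) else 0)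
  set A := univ.filter fun s => q s ≠ 0
  set V : Fin S → ℝ := fun s => lagrangeValue ρ μ (lam s)
  have hVT : ∑ s ∈ A, V s ≤ ∑ t ∈ T, V t := by
    refine sum_le_sum_of_card_le_of_forall_le (hT ▸ hcard)
      (fun t _ => lagrangeValue_nonneg (hlam t) hρ.le hμ) fun s _ hs t ht => ?_
    simp only [T, mem_filter, mem_univ, true_and, not_lt] at hs ht
    exact lagrangeValue_monotoneOn hρ.le hμ (hlam s) (hlam t) (hdec t s (by omega)).le
  calc ∑ s, modeRate ρ (lam s) (q s)
      = ∑ s ∈ A, modeRate ρ (lam s) (q s) := by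
        refine (sum_filter_of_ne fun s _ hs => ?_).symm
        contrapose! hs
        rw [hs, modeRate_zero]
    _ ≤ ∑ s ∈ A, (V s + ρ / (μ * (ρ + μ)) * q s) :=
        sum_le_sum fun s _ => modeRate_le_lagrangeValue_add (hlam s) hρ.le hμ (hq s)
    _ = ∑ s ∈ A, V s + ρ / (μ * (ρ + μ)) * ∑ s, q s := by
        rw [sum_add_distrib, ← mul_sum, sum_filter_ne_zero]
    _ ≤ ∑ t ∈ T, V t + ρ / (μ * (ρ + μ)) * ∑ t ∈ T, waterFill μ (lam t) := by
        rw [show ∑ t ∈ T, waterFill μ (lam t) = P from hfill]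
        exact add_le_add hVT (mul_le_mul_of_nonneg_left hqP (by positivity))
    _ = ∑ t ∈ T, modeRate ρ (lam t) (waterFill μ (lam t)) := by
        simp only [V, lagrangeValue, sum_sub_distrib, mul_sum]
        ring
    _ = _ := by
        rw [sum_filter]
        exact sum_congr rfl fun s _ => by split_ifs <;> simp
end
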